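/- Let G be a finite simple graph whose vertex set is a set of points in the plane ℂ, with minimum degree δ = δ(G), and let k ≥ 1 be an integer with 2^(k−1) ≤ δ. Then for every vertex v of G, the number of irredundant walks p₀p₁⋯p_k in G with k edges starting at p₀ = v is at least ∏_{ℓ=0}^{k−1} (δ − 2^ℓ + 1). -/

import Mathlib

/-- A walk `p₀ p₁ ⋯ p_k` (encoded as `p : Fin (k+1) → V`, `V` a set of points of `ℂ`)
is irredundant if `∑_{i ∈ I} (p_{i+1} - p_i) ≠ 0` for every nonempty
`I ⊆ {0, …, k-1}`. -/
def IrredundantWalk {V : Finset ℂ} (G : SimpleGraph V) (k : ℕ)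
    (p : Fin (k + 1) → V) : Prop :=
  (∀ i : Fin k, G.Adj (p i.castSucc) (p i.succ)) ∧
    ∀ I : Finset (Fin k), I.Nonempty →
      (∑ i ∈ I, ((p i.succ : ℂ) - (p i.castSucc : ℂ))) ≠ 0

/-!
Extend an irredundant walk `p₀ ⋯ pₙ` by a neighbour `w` of `pₙ`. The longer walk fails to be
irredundant only if `w - pₙ + ∑_{i ∈ I} (p_{i+1} - p_i) = 0` for some `I ⊆ {0, …, n-1}`, i.e. only
if `w` is one of the at most `2ⁿ` points `pₙ - ∑_{i ∈ I} (p_{i+1} - p_i)`. The point for `I = ∅`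
is `pₙ` itself, which is not a neighbour, so at least `δ - 2ⁿ + 1` neighbours extend the walk, and
multiplying these counts over the lengths `0, …, k-1` gives the bound.
-/

open Finset

section ZeroSumFree

variable {A : Type*} [AddCommGroup A] {n : ℕ}

def ZeroSumFree (d : Fin n → A) : Prop :=
  ∀ I : Finset (Fin n), I.Nonempty → ∑ i ∈ I, d i ≠ 0

theorem Fin.sum_finset_snoc (d : Fin n → A) (x : A) (I : Finset (Fin (n + 1))) :
    ∑ i ∈ I, (Fin.snoc d x : Fin (n + 1) → A) i =
      ∑ j ∈ univ.filter (fun j => j.castSucc ∈ I), d j + if Fin.last n ∈ I then x else 0 := by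
  rw [← Fintype.sum_ite_mem, Fin.sum_univ_castSucc, sum_filter]
  simp only [Fin.snoc_castSucc, Fin.snoc_last]

theorem ZeroSumFree.snoc {d : Fin n → A} {x : A} (hd : ZeroSumFree d)
    (hx : ∀ I : Finset (Fin n), x + ∑ i ∈ I, d i ≠ 0) :
    ZeroSumFree (Fin.snoc d x : Fin (n + 1) → A) := by
  intro I hI
  rw [Fin.sum_finset_snoc]
  by_cases hlast : Fin.last n ∈ I
  · simpa [hlast, add_comm] using hx _
  · obtain ⟨i, hi⟩ := hI
    have hne : i ≠ Fin.last n := ne_of_mem_of_not_mem hi hlast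
    simpa [hlast] using hd _ ⟨i.castPred hne, by simpa using hi⟩

end ZeroSumFree

def walkSteps {A : Type*} [Sub A] {k : ℕ} (p : Fin (k + 1) → A) : Fin k → A :=
  fun i => p i.succ - p i.castSucc

theorem walkSteps_snoc {A : Type*} [Sub A] {k : ℕ} (p : Fin (k + 1) → A) (a : A) :
    walkSteps (Fin.snoc p a : Fin (k + 2) → A) = Fin.snoc (walkSteps p) (a - p (Fin.last k)) := by
  funext i
  induction i using Fin.lastCases with
  | last => simp [walkSteps]
  | cast j => simp only [walkSteps, Fin.succ_castSucc, Fin.snoc_castSucc]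

theorem card_mul_le_card_of_snoc_mem {α : Type*} {n m : ℕ} {s : Finset (Fin n → α)}
    {t : Finset (Fin (n + 1) → α)} (N : (Fin n → α) → Finset α) (hN : ∀ p ∈ s, m ≤ #(N p))
    (hst : ∀ p ∈ s, ∀ a ∈ N p, (Fin.snoc p a : Fin (n + 1) → α) ∈ t) : #s * m ≤ #t :=
  calc #s * m ≤ ∑ p ∈ s, #(N p) := by simpa using card_nsmul_le_sum s (fun p => #(N p)) m hN
    _ = #(s.sigma N) := (card_sigma _ _).symm
    _ ≤ #t := card_le_card_of_injOn (fun x => Fin.snoc x.1 x.2)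
        (fun x hx => hst _ (mem_sigma.1 hx).1 _ (mem_sigma.1 hx).2)
        fun _ _ _ _ h =>
          Sigma.ext_iff.2 ((Fin.snoc_injective2 h).imp id heq_of_eq)

section Graph

variable {V : Finset ℂ} (G : SimpleGraph V)

open Classical in
noncomputable def irredundantWalksFrom (v : V) (n : ℕ) : Finset (Fin (n + 1) → V) :=
  univ.filter fun p => p 0 = v ∧ IrredundantWalk G n p

theorem mem_irredundantWalksFrom {v : V} {n : ℕ} {p : Fin (n + 1) → V} :
    p ∈ irredundantWalksFrom G v n ↔ p 0 = v ∧ IrredundantWalk G n p := by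
  simp [irredundantWalksFrom]

variable [DecidableRel G.Adj]

open Classical in
noncomputable def irredundantNext {n : ℕ} (p : Fin (n + 1) → V) : Finset V :=
  (G.neighborFinset (p (Fin.last n))).filter fun w =>
    ∀ I : Finset (Fin n), ((w : ℂ) - p (Fin.last n)) + ∑ i ∈ I, walkSteps (fun j => (p j : ℂ)) i ≠ 0

theorem mem_irredundantNext {n : ℕ} {p : Fin (n + 1) → V} {w : V} :
    w ∈ irredundantNext G p ↔ G.Adj (p (Fin.last n)) w ∧ ∀ I : Finset (Fin n),
      ((w : ℂ) - p (Fin.last n)) + ∑ i ∈ I, walkSteps (fun j => (p j : ℂ)) i ≠ 0 := by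
  simp [irredundantNext]

theorem card_irredundantNext_ge {n : ℕ} (p : Fin (n + 1) → V) :
    G.minDegree + 1 - 2 ^ n ≤ #(irredundantNext G p) := by
  set N := G.neighborFinset (p (Fin.last n))
  set F := (univ.powerset.erase ∅).image fun I : Finset (Fin n) =>
    (p (Fin.last n) : ℂ) - ∑ i ∈ I, walkSteps (fun j => (p j : ℂ)) i
  have hF : #F ≤ 2 ^ n - 1 := by
    refine card_image_le.trans ?_
    rw [card_erase_of_mem (empty_mem_powerset _), card_powerset, card_univ, Fintype.card_fin]
  have hN : G.minDegree ≤ #N := by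
    rw [G.card_neighborFinset_eq_degree]
    exact G.minDegree_le_degree _
  have hsub : N.map (Function.Embedding.subtype _) \ F ⊆
      (irredundantNext G p).map (Function.Embedding.subtype _) := by
    intro z hz
    obtain ⟨hzN, hzF⟩ := mem_sdiff.1 hz
    obtain ⟨w, hw, rfl⟩ := mem_map.1 hzN
    have hadj := (G.mem_neighborFinset _ _).1 hw
    refine mem_map_of_mem _ ((mem_irredundantNext G).2 ⟨hadj, fun I hI => ?_⟩)
    obtain rfl | hne := I.eq_empty_or_nonempty
    · exact hadj.ne (Subtype.ext (by simpa [sub_eq_zero] using hI)).symm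
    · exact hzF (mem_image.2 ⟨I, mem_erase.2 ⟨hne.ne_empty, mem_powerset.2 (subset_univ _)⟩,
        by simp only [Function.Embedding.coe_subtype]; linear_combination -hI⟩)
  have := Nat.one_le_two_pow (n := n)
  calc G.minDegree + 1 - 2 ^ n ≤ #(N.map (Function.Embedding.subtype _)) - #F := by
        rw [card_map]; omega
    _ ≤ #(N.map (Function.Embedding.subtype _) \ F) := le_card_sdiff _ _
    _ ≤ #((irredundantNext G p).map (Function.Embedding.subtype _)) := card_le_card hsub
    _ = #(irredundantNext G p) := card_map _

theorem IrredundantWalk.snoc {n : ℕ} {p : Fin (n + 1) → V} {w : V} (hp : IrredundantWalk G n p)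
    (hw : w ∈ irredundantNext G p) :
    IrredundantWalk G (n + 1) (Fin.snoc p w : Fin (n + 2) → V) := by
  obtain ⟨hwN, hwI⟩ := (mem_irredundantNext G).1 hw
  refine ⟨fun i => ?_, ?_⟩
  · induction i using Fin.lastCases with
    | last => simpa using hwN
    | cast j =>
      rw [Fin.succ_castSucc, Fin.snoc_castSucc, Fin.snoc_castSucc]
      exact hp.1 j
  · show ZeroSumFree (walkSteps (Subtype.val ∘ (Fin.snoc p w : Fin (n + 2) → V)))
    rw [Fin.comp_snoc, walkSteps_snoc]
    exact ZeroSumFree.snoc hp.2 hwI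

theorem card_mul_le_card_irredundantWalksFrom_succ (v : V) (n : ℕ) :
    #(irredundantWalksFrom G v n) * (G.minDegree + 1 - 2 ^ n) ≤
      #(irredundantWalksFrom G v (n + 1)) := by
  refine card_mul_le_card_of_snoc_mem (irredundantNext G) (fun p _ => card_irredundantNext_ge G p)
    fun p hp w hw => ?_
  obtain ⟨hp0, hp⟩ := (mem_irredundantWalksFrom G).1 hp
  exact (mem_irredundantWalksFrom G).2
    ⟨by rw [← Fin.castSucc_zero, Fin.snoc_castSucc, hp0], hp.snoc G hw⟩

theorem prod_le_card_irredundantWalksFrom (v : V) (k : ℕ) :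
    ∏ ℓ ∈ range k, (G.minDegree + 1 - 2 ^ ℓ) ≤ #(irredundantWalksFrom G v k) := by
  induction k with
  | zero =>
    exact card_pos.2 ⟨fun _ => v, (mem_irredundantWalksFrom G).2
      ⟨rfl, fun i => i.elim0, fun _ hI => hI.choose.elim0⟩⟩
  | succ n ih =>
    rw [prod_range_succ]
    exact (Nat.mul_le_mul_right _ ih).trans (card_mul_le_card_irredundantWalksFrom_succ G v n)

end Graph

theorem card_irredundant_walks_ge_general (V : Finset ℂ) (G : SimpleGraph V)
    [DecidableRel G.Adj] (k : ℕ)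
    (hδ : 2 ^ (k - 1) ≤ G.minDegree) (v : V) :
    (∏ ℓ ∈ Finset.range k, ((G.minDegree : ℝ) - 2 ^ ℓ + 1)) ≤
      ({p : Fin (k + 1) → V | p 0 = v ∧ IrredundantWalk G k p}.ncard : ℝ) := by
  have hpow : ∀ ℓ ∈ range k, 2 ^ ℓ ≤ G.minDegree := fun ℓ hℓ =>
    (Nat.pow_le_pow_right two_pos (by grind)).trans hδ
  have hwalks : {p : Fin (k + 1) → V | p 0 = v ∧ IrredundantWalk G k p} =
      irredundantWalksFrom G v k := by
    ext; simp [mem_irredundantWalksFrom]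
  rw [hwalks, Set.ncard_coe_finset]
  calc ∏ ℓ ∈ range k, ((G.minDegree : ℝ) - 2 ^ ℓ + 1)
      = ((∏ ℓ ∈ range k, (G.minDegree + 1 - 2 ^ ℓ) : ℕ) : ℝ) := by
        rw [Nat.cast_prod]
        refine prod_congr rfl fun ℓ hℓ => ?_
        rw [Nat.cast_sub ((hpow ℓ hℓ).trans (Nat.le_succ _))]
        push_cast
        ring
    _ ≤ #(irredundantWalksFrom G v k) := by
        exact_mod_cast prod_le_card_irredundantWalksFrom G v k

/-- In a finite graph on points of the plane with minimum degree `δ` and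
`2^(k-1) ≤ δ`, the number of irredundant walks with `k` edges starting at any
fixed vertex `v` is at least `∏_{ℓ=0}^{k-1} (δ - 2^ℓ + 1)`. -/
theorem card_irredundant_walks_ge (V : Finset ℂ) (G : SimpleGraph V)
    [DecidableRel G.Adj] (k : ℕ) (hk : 1 ≤ k)
    (hδ : 2 ^ (k - 1) ≤ G.minDegree) (v : V) :
    (∏ ℓ ∈ Finset.range k, ((G.minDegree : ℝ) - 2 ^ ℓ + 1)) ≤
      ({p : Fin (k + 1) → V | p 0 = v ∧ IrredundantWalk G k p}.ncard : ℝ) :=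
  card_irredundant_walks_ge_general V G k hδ v
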